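/- Quadratic form of a negative semidefinite symmetric irreducible Metzler matrix on boundary vectors: Let M ∈ ℝ^{n×n} be symmetric with M_{ij} ≥ 0 for all i ≠ j (Metzler), irreducible, and negative semidefinite. If x ∈ ℝⁿ satisfies x_i ≥ 0 for all i, x ≠ 0, and x_k = 0 for some index k, then xᵀ M x < 0. -/
import Mathlib


open Matrix

/-- Irreducibility of a matrix. -/
def MatIrreducible {n : ℕ} (M : Matrix (Fin n) (Fin n) ℝ) : Prop :=
  ∀ S : Set (Fin n), S.Nonempty → S ≠ Set.univ → ∃ i ∈ S, ∃ j ∉ S, 0 < M i j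

theorem stmt9 {n : ℕ} (hn : 2 ≤ n) (M : Matrix (Fin n) (Fin n) ℝ)
    (hsym : M.IsSymm) (hmetz : ∀ i j, i ≠ j → 0 ≤ M i j)
    (hirr : MatIrreducible M)
    (hnsd : ∀ v : Fin n → ℝ, v ⬝ᵥ (M *ᵥ v) ≤ 0)
    (x : Fin n → ℝ) (hx : ∀ i, 0 ≤ x i) (hx0 : x ≠ 0)
    (k : Fin n) (hk : x k = 0) :
    x ⬝ᵥ (M *ᵥ x) < 0 := by
  by_contra hcon
  push_neg at hcon
  have hq0 : x ⬝ᵥ (M *ᵥ x) = 0 := le_antisymm (hnsd x) hcon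
  -- symmetry of the bilinear form
  have hbil : ∀ u v : Fin n → ℝ, u ⬝ᵥ (M *ᵥ v) = v ⬝ᵥ (M *ᵥ u) := by
    intro u v
    rw [Matrix.dotProduct_mulVec, ← Matrix.mulVec_transpose, hsym.eq, dotProduct_comm]
  set w := M *ᵥ x with hw
  -- expansion : for all t, 2 t c + t^2 a ≤ 0 where c = w⬝w, a = w⬝Mw
  have hc : (0:ℝ) ≤ w ⬝ᵥ w := Finset.sum_nonneg fun i _ => mul_self_nonneg (w i)
  have ha : w ⬝ᵥ (M *ᵥ w) ≤ 0 := hnsd w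
  have hexp : ∀ t : ℝ, 2 * t * (w ⬝ᵥ w) + t^2 * (w ⬝ᵥ (M *ᵥ w)) ≤ 0 := by
    intro t
    have := hnsd (x + t • w)
    have e : (x + t • w) ⬝ᵥ (M *ᵥ (x + t • w))
        = x ⬝ᵥ (M *ᵥ x) + 2 * t * (w ⬝ᵥ w) + t^2 * (w ⬝ᵥ (M *ᵥ w)) := by
      rw [Matrix.mulVec_add, Matrix.mulVec_smul, add_dotProduct,
        dotProduct_add, dotProduct_add, smul_dotProduct,
        dotProduct_smul, dotProduct_smul]
      have h1 : x ⬝ᵥ (M *ᵥ w) = w ⬝ᵥ w := by rw [hbil x w]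
      have h2 : w ⬝ᵥ (M *ᵥ x) = w ⬝ᵥ w := rfl
      rw [h1, h2]
      simp only [smul_dotProduct, dotProduct_smul, smul_eq_mul]
      ring
    rw [e, hq0, zero_add] at this
    exact this
  have hcz : w ⬝ᵥ w = 0 := by
    set c := w ⬝ᵥ w with hcdef
    set a := w ⬝ᵥ (M *ᵥ w) with hadef
    rcases eq_or_lt_of_le ha with h | h
    · have := hexp 1
      nlinarith
    · rcases eq_or_lt_of_le hc with h' | h'
      · exact h'.symm
      · exfalso
        have ht := hexp (-c/a)
        have hane : a ≠ 0 := ne_of_lt h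
        have heq : 2*(-c/a)*c + (-c/a)^2*a = -c^2/a := by
          field_simp
          ring
        rw [heq] at ht
        have hpos : 0 < -c^2/a := div_pos_of_neg_of_neg (by nlinarith) h
        linarith
  have hwz : w = 0 := by
    ext i
    have := (dotProduct_self_eq_zero (v := w)).mp hcz
    simp [this]
  -- irreducibility contradiction
  set S : Set (Fin n) := {i | x i = 0} with hS
  have hkS : k ∈ S := hk
  have hSn : S.Nonempty := ⟨k, hkS⟩
  have hSne : S ≠ Set.univ := by
    intro h
    apply hx0
    funext i
    have : i ∈ S := h ▸ Set.mem_univ i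
    exact this
  obtain ⟨i, hiS, j, hjS, hMij⟩ := hirr S hSn hSne
  have hxj : 0 < x j := lt_of_le_of_ne (hx j) (fun h => hjS h.symm)
  have hMxi : w i = 0 := by rw [hwz]; rfl
  have hsum : ∑ l, M i l * x l = 0 := hMxi
  have hterm : ∀ l ∈ Finset.univ, 0 ≤ M i l * x l := by
    intro l _
    rcases eq_or_ne l i with rfl | hne
    · have : x l = 0 := hiS
      simp [this]
    · exact mul_nonneg (hmetz i l (Ne.symm hne)) (hx l)
  have := (Finset.sum_eq_zero_iff_of_nonneg hterm).mp hsum j (Finset.mem_univ j)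
  nlinarith
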